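/- Let (A_0, A_1) be a topologically contractive pair of matrices in Σ. Then for every nonempty word v = a_0…a_{t−1} ∈ {0,1}^t, the product A_v = A_{a_0}⋯A_{a_{t−1}} fixes at most one vertex of Δ: there do not exist indices i ≠ j with A_v e_i = e_i and A_v e_j = e_j. -/

import Mathlib

open Matrix

abbrev MatZ (n : ℕ) : Type := Matrix (Fin (n + 1)) (Fin (n + 1)) ℤ

def inSigma {n : ℕ} (A : MatZ n) : Prop :=
  IsUnit A.det ∧ ∀ i j, 0 ≤ A i j

def IsPermMat {n : ℕ} (A : MatZ n) : Prop :=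
  ∃ σ : Equiv.Perm (Fin (n + 1)), ∀ i j, A i j = if i = σ j then 1 else 0

noncomputable def toR {n : ℕ} (A : MatZ n) : Matrix (Fin (n + 1)) (Fin (n + 1)) ℝ :=
  A.map ((↑) : ℤ → ℝ)

noncomputable def projAct {n : ℕ} (A : Matrix (Fin (n + 1)) (Fin (n + 1)) ℝ)
    (x : Fin (n + 1) → ℝ) : Fin (n + 1) → ℝ :=
  (∑ i, (A *ᵥ x) i)⁻¹ • (A *ᵥ x)

noncomputable def simg {n : ℕ} (A : MatZ n) : Set (Fin (n + 1) → ℝ) :=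
  projAct (toR A) '' stdSimplex ℝ (Fin (n + 1))

def wordProd {n : ℕ} (A0 A1 : MatZ n) (w : List Bool) : MatZ n :=
  (w.map (fun b => bif b then A1 else A0)).prod

def Contractive {n : ℕ} (A0 A1 : MatZ n) : Prop :=
  ∀ a : ℕ → Bool, ∃ p,
    (⋂ t : ℕ, simg (wordProd A0 A1 ((List.range t).map a))) = {p}

def Nmat (n : ℕ) : MatZ n :=
  Matrix.of fun i j => if i = j then 1 else if j = 1 ∧ i = 0 then 1 else 0

def Fmat (n : ℕ) : MatZ n :=
  Matrix.of fun i j => if i = Equiv.swap (0 : Fin (n + 1)) 1 j then 1 else 0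

def Rmat (n : ℕ) : MatZ n :=
  Matrix.of fun i j => if i = j + 1 then 1 else 0

def Lmat (n : ℕ) : MatZ n := Fmat n * Nmat n * Fmat n

def Mon0 (n : ℕ) : MatZ n := Nmat n * Fmat n * Rmat n

def Mon1 (n : ℕ) : MatZ n := Lmat n * Rmat n

def permMat {n : ℕ} (σ : Equiv.Perm (Fin (n + 1))) : MatZ n :=
  Matrix.of fun i j => if i = σ j then 1 else 0

/-!
Suppose `A_v` fixes the vertex `e_i` and follow the periodic sequence `v v v …`. Multiplying
on the right by a matrix of `Σ` can only shrink the image of `Δ`, because such a matrix maps `Δ`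
into itself projectively; so the image under the prefix product of length `t` contains the image
under the prefix product of length `t·|v|`, which is `A_v^t`, and `e_i = A_v^t(e_i)` lies in the
latter. Hence every fixed vertex of `A_v` lies in the intersection of the nested images, and
contractivity leaves room for only one.
-/

lemma mulVec_nonneg_of_nonneg {m ι R : Type*} [Fintype ι] [Semiring R] [PartialOrder R]
    [IsOrderedRing R] {B : Matrix m ι R} (hB : ∀ i j, 0 ≤ B i j) {x : ι → R} (hx : 0 ≤ x)
    (i : m) : 0 ≤ (B *ᵥ x) i :=
  Finset.sum_nonneg fun j _ => mul_nonneg (hB i j) (hx j)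

lemma mulVec_pow_of_mulVec_eq {ι R : Type*} [Fintype ι] [DecidableEq ι] [Semiring R]
    {B : Matrix ι ι R} {x : ι → R} (hx : B *ᵥ x = x) (m : ℕ) : B ^ m *ᵥ x = x := by
  induction m with
  | zero => simp
  | succ m ih => rw [pow_succ, ← mulVec_mulVec, hx, ih]

section

variable {n : ℕ} {A0 A1 : MatZ n}

lemma projAct_smul (A : Matrix (Fin (n + 1)) (Fin (n + 1)) ℝ) {c : ℝ} (hc : c ≠ 0)
    (x : Fin (n + 1) → ℝ) : projAct A (c • x) = projAct A x := by
  simp only [projAct, mulVec_smul, Pi.smul_apply, smul_eq_mul, ← Finset.mul_sum, mul_inv,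
    smul_smul]
  rw [mul_comm c⁻¹, mul_assoc, inv_mul_cancel₀ hc, mul_one]

lemma projAct_mul (A B : Matrix (Fin (n + 1)) (Fin (n + 1)) ℝ) {x : Fin (n + 1) → ℝ}
    (hx : ∑ i, (B *ᵥ x) i ≠ 0) : projAct (A * B) x = projAct A (projAct B x) := by
  have hBx : projAct B x = (∑ i, (B *ᵥ x) i)⁻¹ • (B *ᵥ x) := rfl
  rw [hBx, projAct_smul A (inv_ne_zero hx), projAct, projAct, mulVec_mulVec]

lemma projAct_mem_stdSimplex {B : Matrix (Fin (n + 1)) (Fin (n + 1)) ℝ}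
    (hB : ∀ i j, 0 ≤ B i j) {x : Fin (n + 1) → ℝ} (hx : x ∈ stdSimplex ℝ (Fin (n + 1)))
    (hBx : 0 < ∑ i, (B *ᵥ x) i) : projAct B x ∈ stdSimplex ℝ (Fin (n + 1)) := by
  refine ⟨fun i => ?_, ?_⟩
  · exact mul_nonneg (inv_nonneg.mpr hBx.le) (mulVec_nonneg_of_nonneg hB hx.1 i)
  · simp only [projAct, Pi.smul_apply, smul_eq_mul, ← Finset.mul_sum, inv_mul_cancel₀ hBx.ne']

lemma toR_eq_mapMatrix (A : MatZ n) : toR A = (Int.castRingHom ℝ).mapMatrix A := rfl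

lemma toR_mul (A B : MatZ n) : toR (A * B) = toR A * toR B := by
  simp only [toR_eq_mapMatrix, map_mul]

lemma inSigma.toR_nonneg {B : MatZ n} (hB : inSigma B) (i j : Fin (n + 1)) :
    0 ≤ toR B i j :=
  Int.cast_nonneg (hB.2 i j)

lemma inSigma.det_toR_ne_zero {B : MatZ n} (hB : inSigma B) : (toR B).det ≠ 0 := by
  rw [toR_eq_mapMatrix, ← RingHom.map_det]
  exact (hB.1.map (Int.castRingHom ℝ)).ne_zero

lemma inSigma.sum_mulVec_pos {B : MatZ n} (hB : inSigma B) {x : Fin (n + 1) → ℝ}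
    (hx : x ∈ stdSimplex ℝ (Fin (n + 1))) : 0 < ∑ i, (toR B *ᵥ x) i := by
  have hBx_nonneg := mulVec_nonneg_of_nonneg hB.toR_nonneg hx.1
  have hBx_ne : toR B *ᵥ x ≠ 0 := fun h => by
    have hsum := hx.2
    simp [eq_zero_of_mulVec_eq_zero hB.det_toR_ne_zero h] at hsum
  obtain ⟨i, hi⟩ := Function.ne_iff.mp hBx_ne
  exact Finset.sum_pos' (fun i _ => hBx_nonneg i)
    ⟨i, Finset.mem_univ i, (hBx_nonneg i).lt_of_ne' hi⟩

lemma simg_mul_subset (A : MatZ n) {B : MatZ n} (hB : inSigma B) :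
    simg (A * B) ⊆ simg A := by
  rintro _ ⟨x, hx, rfl⟩
  have hBx := hB.sum_mulVec_pos hx
  refine ⟨projAct (toR B) x, projAct_mem_stdSimplex hB.toR_nonneg hx hBx, ?_⟩
  rw [toR_mul, projAct_mul _ _ hBx.ne']

lemma single_mem_simg {A : MatZ n} {i : Fin (n + 1)}
    (hA : A *ᵥ Pi.single i 1 = Pi.single i 1) : Pi.single i 1 ∈ simg A := by
  have hAR : toR A *ᵥ Pi.single i (1 : ℝ) = Pi.single i 1 := by
    ext k
    have hAk := congrFun hA k
    rw [mulVec_single_one] at hAk ⊢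
    simp only [col_apply, toR, map_apply] at hAk ⊢
    rw [hAk]
    simp [Pi.single_apply, apply_ite]
  refine ⟨Pi.single i 1, ?_, ?_⟩
  · exact single_mem_stdSimplex ℝ i
  · simp [projAct, hAR]

lemma inSigma_one : inSigma (1 : MatZ n) :=
  ⟨by simp, fun i j => by by_cases h : i = j <;> simp [one_apply, h]⟩

lemma inSigma.mul {A B : MatZ n} (hA : inSigma A) (hB : inSigma B) :
    inSigma (A * B) :=
  ⟨det_mul A B ▸ hA.1.mul hB.1, fun i j => mulVec_nonneg_of_nonneg hA.2 (fun k => hB.2 k j) i⟩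

lemma wordProd_append (A0 A1 : MatZ n) (w₁ w₂ : List Bool) :
    wordProd A0 A1 (w₁ ++ w₂) = wordProd A0 A1 w₁ * wordProd A0 A1 w₂ := by
  simp [wordProd]

lemma wordProd_flatten_replicate (A0 A1 : MatZ n) (v : List Bool) (m : ℕ) :
    wordProd A0 A1 (List.replicate m v).flatten = wordProd A0 A1 v ^ m := by
  induction m with
  | zero => simp [wordProd]
  | succ m ih => rw [List.replicate_succ', List.flatten_append, wordProd_append, ih,
      List.flatten_singleton, pow_succ]

lemma inSigma_wordProd (h0 : inSigma A0) (h1 : inSigma A1) (w : List Bool) :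
    inSigma (wordProd A0 A1 w) := by
  induction w with
  | nil => exact inSigma_one
  | cons b w ih =>
    rw [← List.singleton_append, wordProd_append]
    exact inSigma.mul (by cases b <;> simpa [wordProd]) ih

lemma simg_wordProd_range_antitone (h0 : inSigma A0) (h1 : inSigma A1) (a : ℕ → Bool) :
    Antitone fun t => simg (wordProd A0 A1 ((List.range t).map a)) := by
  intro t t' htt'
  obtain ⟨s, rfl⟩ := Nat.exists_eq_add_of_le htt'
  simp only [List.range_add, List.map_append, wordProd_append]
  exact simg_mul_subset _ (inSigma_wordProd h0 h1 _)

def periodicSeq (v : List Bool) (s : ℕ) : Bool := v.getD (s % v.length) false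

lemma map_range_mul_length_periodicSeq (v : List Bool) (m : ℕ) :
    (List.range (m * v.length)).map (periodicSeq v) = (List.replicate m v).flatten := by
  induction m with
  | zero => simp
  | succ m ih =>
    rw [Nat.succ_mul, List.range_add, List.map_append, ih, List.replicate_succ',
      List.flatten_append, List.flatten_singleton, List.map_map]
    congr 1
    refine List.ext_getElem (by simp) fun k hk _ => ?_
    simp only [List.length_map, List.length_range] at hk
    simp [periodicSeq, Nat.mod_eq_of_lt hk, List.getElem?_eq_getElem hk]

lemma single_mem_iInter_simg_periodicSeq (h0 : inSigma A0) (h1 : inSigma A1)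
    {v : List Bool} (hv : v ≠ []) {i : Fin (n + 1)}
    (hi : wordProd A0 A1 v *ᵥ Pi.single i 1 = Pi.single i 1) :
    Pi.single i 1 ∈ ⋂ t : ℕ, simg (wordProd A0 A1 ((List.range t).map (periodicSeq v))) := by
  refine Set.mem_iInter.mpr fun t => ?_
  have ht : t ≤ t * v.length := Nat.le_mul_of_pos_right t (List.length_pos_iff.mpr hv)
  apply simg_wordProd_range_antitone h0 h1 _ ht
  simp only [map_range_mul_length_periodicSeq, wordProd_flatten_replicate]
  exact single_mem_simg (mulVec_pow_of_mulVec_eq hi t)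

end

theorem stmt14_general (n : ℕ) (A0 A1 : MatZ n)
    (h0 : inSigma A0) (h1 : inSigma A1)
    (hC : Contractive A0 A1) (v : List Bool) (hv : v ≠ []) :
    ¬ ∃ i j : Fin (n + 1), i ≠ j ∧
      wordProd A0 A1 v *ᵥ Pi.single i 1 = Pi.single i 1 ∧
      wordProd A0 A1 v *ᵥ Pi.single j 1 = Pi.single j 1 := by
  rintro ⟨i, j, hij, hi, hj⟩
  obtain ⟨p, hp⟩ := hC (periodicSeq v)
  have hi' := single_mem_iInter_simg_periodicSeq h0 h1 hv hi
  have hj' := single_mem_iInter_simg_periodicSeq h0 h1 hv hj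
  rw [hp, Set.mem_singleton_iff] at hi' hj'
  simpa [Pi.single_apply, hij] using congrFun (hi'.trans hj'.symm) i

theorem stmt14 (n : ℕ) (hn : 1 ≤ n) (A0 A1 : MatZ n)
    (h0 : inSigma A0) (h1 : inSigma A1)
    (hnp0 : ¬ IsPermMat A0) (hnp1 : ¬ IsPermMat A1)
    (hC : Contractive A0 A1) (v : List Bool) (hv : v ≠ []) :
    ¬ ∃ i j : Fin (n + 1), i ≠ j ∧
      wordProd A0 A1 v *ᵥ Pi.single i 1 = Pi.single i 1 ∧
      wordProd A0 A1 v *ᵥ Pi.single j 1 = Pi.single j 1 :=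
  stmt14_general n A0 A1 h0 h1 hC v hv
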